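/- arXiv:1307.6458 — 3 statements merged into one kernel-verified Lean document; each statement's English description precedes it below -/
import Mathlib

section
/- Let C' be a linear code of length n+r over F_q with a k×(n+r) generator matrix obtained by inserting r arbitrary columns into a generator matrix of an [n,k] generalized Reed–Solomon code C, with k < (n−r)/2. Then 2k−1 ≤ dim((C')²) ≤ 2k−1+r. -/
open Submodule Polynomial Matrix Pointwise

/-- The star (componentwise) product code of two linear codes. -/
noncomputable def starProd {F : Type*} [Field F] {ι : Type*} (A B : Submodule F (ι → F)) :
    Submodule F (ι → F) :=
  Submodule.span F {w | ∃ a ∈ A, ∃ b ∈ B, w = a * b}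

/-- The generalized Reed-Solomon code of dimension `k` with support `x` and multipliers `y`. -/
noncomputable def GRS {F : Type*} [Field F] {ι : Type*} (k : ℕ) (x y : ι → F) :
    Submodule F (ι → F) :=
  Submodule.span F
    {c | ∃ p : Polynomial F, p ∈ Polynomial.degreeLT F k ∧ c = fun i => y i * p.eval (x i)}

section Aux

variable {F : Type*} [Field F] {ι : Type*}

/-- The evaluation map sending a polynomial to its GRS codeword. -/
noncomputable def grsMap (x y : ι → F) : Polynomial F →ₗ[F] (ι → F) where
  toFun p := fun i => y i * p.eval (x i)
  map_add' p q := funext fun i => by simp [mul_add]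
  map_smul' c p := funext fun i => by simp [mul_left_comm, mul_comm, mul_assoc]

lemma GRS_eq_map (k : ℕ) (x y : ι → F) :
    GRS k x y = (Polynomial.degreeLT F k).map (grsMap x y) := by
  have hset : {c | ∃ p : Polynomial F, p ∈ Polynomial.degreeLT F k ∧
      c = fun i => y i * p.eval (x i)} = grsMap x y '' (Polynomial.degreeLT F k : Set F[X]) := by
    ext c
    constructor
    · rintro ⟨p, hp, rfl⟩; exact ⟨p, hp, rfl⟩
    · rintro ⟨p, hp, rfl⟩; exact ⟨p, hp, rfl⟩
  rw [GRS, hset, Submodule.span_image, Submodule.span_eq]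

lemma finrank_GRS [Fintype ι] {m : ℕ} (hm : m ≤ Fintype.card ι) {x y : ι → F}
    (hx : Function.Injective x) (hy : ∀ i, y i ≠ 0) :
    Module.finrank F ↥(GRS m x y) = m := by
  have hrange : GRS m x y = LinearMap.range ((grsMap x y).comp (degreeLT F m).subtype) := by
    rw [GRS_eq_map, LinearMap.range_comp, Submodule.range_subtype]
  have hinj : Function.Injective ((grsMap x y).comp (degreeLT F m).subtype) := by
    rw [← LinearMap.ker_eq_bot, eq_bot_iff]
    rintro ⟨p, hp⟩ h
    rw [LinearMap.mem_ker] at h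
    have h0 : ∀ i, p.eval (x i) = 0 := by
      intro i
      have h2 : y i * p.eval (x i) = 0 := congrFun h i
      exact (mul_eq_zero.1 h2).resolve_left (hy i)
    have hp0 : p = 0 := by
      by_cases hz : p = 0
      · exact hz
      · refine p.eq_zero_of_natDegree_lt_card_of_eval_eq_zero hx h0 ?_
        have := (Polynomial.natDegree_lt_iff_degree_lt hz).2 (Polynomial.mem_degreeLT.1 hp)
        omega
    exact (Submodule.mem_bot F).2 (Subtype.ext hp0)
  rw [hrange, LinearMap.finrank_range_of_inj hinj]
  have := (Polynomial.degreeLTEquiv F m).finrank_eq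
  simpa [Module.finrank_fin_fun] using this

lemma starProd_eq_mul (A B : Submodule F (ι → F)) : starProd A B = A * B := by
  have : {w | ∃ a ∈ A, ∃ b ∈ B, w = a * b} = (A : Set (ι → F)) * (B : Set (ι → F)) := by
    ext w
    simp only [Set.mem_mul, Set.mem_setOf_eq, SetLike.mem_coe]
    constructor
    · rintro ⟨a, ha, b, hb, rfl⟩; exact ⟨a, ha, b, hb, rfl⟩
    · rintro ⟨a, ha, b, hb, rfl⟩; exact ⟨a, ha, b, hb, rfl⟩
  rw [starProd, this, ← Submodule.span_mul_span, Submodule.span_eq, Submodule.span_eq]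

/-- Monomial generating set of a GRS code. -/
lemma GRS_eq_span_monomials (m : ℕ) (x y : ι → F) :
    GRS m x y = Submodule.span F ((fun j : ℕ => fun i => y i * x i ^ j) '' Set.Iio m) := by
  classical
  rw [GRS_eq_map, Polynomial.degreeLT_eq_span_X_pow, Submodule.map_span]
  congr 1
  rw [Finset.coe_image, Finset.coe_range, ← Set.image_comp]
  ext w
  simp only [Set.mem_image, Function.comp_apply]
  constructor
  · rintro ⟨j, hj, rfl⟩
    exact ⟨j, hj, by funext i; simp [grsMap]⟩
  · rintro ⟨j, hj, rfl⟩
    exact ⟨j, hj, by funext i; simp [grsMap]⟩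

lemma starProd_GRS {k : ℕ} (hk : 1 ≤ k) (x y : ι → F) :
    starProd (GRS k x y) (GRS k x y) = GRS (2 * k - 1) x (y * y) := by
  rw [starProd_eq_mul, GRS_eq_span_monomials k x y, GRS_eq_span_monomials (2 * k - 1) x (y * y),
    Submodule.span_mul_span]
  congr 1
  ext w
  simp only [Set.mem_mul, Set.mem_image, Set.mem_Iio]
  constructor
  · rintro ⟨u, ⟨a, ha, rfl⟩, v, ⟨b, hb, rfl⟩, rfl⟩
    refine ⟨a + b, by omega, ?_⟩
    funext i
    simp [Pi.mul_apply, pow_add]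
    ring
  · rintro ⟨c, hc, rfl⟩
    obtain ⟨a, b, ha, hb, rfl⟩ : ∃ a b, a < k ∧ b < k ∧ a + b = c :=
      ⟨min c (k - 1), c - min c (k - 1), by omega, by omega, by omega⟩
    refine ⟨_, ⟨a, ha, rfl⟩, _, ⟨b, hb, rfl⟩, ?_⟩
    funext i
    simp [Pi.mul_apply, pow_add]
    ring

/-- Restriction along a map, as an algebra homomorphism. -/
noncomputable def restrAlg {α β : Type*} (f : α → β) : (β → F) →ₐ[F] (α → F) where
  toFun v := v ∘ f
  map_one' := rfl
  map_mul' _ _ := rfl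
  map_zero' := rfl
  map_add' _ _ := rfl
  commutes' _ := rfl

lemma finrank_le_finrank_map_add_finrank_ker {M N : Type*} [AddCommGroup M] [Module F M]
    [AddCommGroup N] [Module F N] [FiniteDimensional F M] (f : M →ₗ[F] N)
    (p : Submodule F M) :
    Module.finrank F p ≤ Module.finrank F (p.map f) + Module.finrank F (LinearMap.ker f) := by
  have h := LinearMap.finrank_range_add_finrank_ker (f.domRestrict p)
  rw [LinearMap.range_domRestrict, LinearMap.ker_domRestrict] at h
  have hker : Module.finrank F ((LinearMap.ker f).comap p.subtype)
      ≤ Module.finrank F (LinearMap.ker f) := by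
    have hmap : (((LinearMap.ker f).comap p.subtype).map p.subtype) ≤ LinearMap.ker f := by
      rintro z hz
      obtain ⟨⟨z', hz'⟩, hz2, rfl⟩ := hz
      exact hz2
    calc Module.finrank F ((LinearMap.ker f).comap p.subtype)
        = Module.finrank F (((LinearMap.ker f).comap p.subtype).map p.subtype) :=
          (LinearEquiv.finrank_eq (Submodule.equivMapOfInjective p.subtype
            (Submodule.injective_subtype p) _))
      _ ≤ Module.finrank F (LinearMap.ker f) := Submodule.finrank_mono hmap
  omega

end Aux

/-- Inserting `r` arbitrary columns into a generator matrix of an `[n,k]` GRS code with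
`k < (n-r)/2` yields a code `C'` with `2k-1 ≤ dim (C')² ≤ 2k-1+r`. -/
theorem stmt5 {F : Type*} [Field F] [Fintype F] {n r k : ℕ}
    (hrn : r ≤ n) (hk : 2 * k < n - r)
    (x y : Fin n → F) (hx : Function.Injective x) (hy : ∀ i, y i ≠ 0)
    (G : Matrix (Fin k) (Fin n) F)
    (hGind : LinearIndependent F (fun i => G i))
    (hG : Submodule.span F (Set.range fun i => G i) = GRS k x y)
    (ι : Fin n ↪ Fin (n + r)) (G' : Matrix (Fin k) (Fin (n + r)) F)
    (hG' : ∀ i j, G' i (ι j) = G i j)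
    (C' : Submodule F (Fin (n + r) → F))
    (hC' : C' = Submodule.span F (Set.range fun i => G' i)) :
    2 * k - 1 ≤ Module.finrank F ↥(starProd C' C') ∧
    Module.finrank F ↥(starProd C' C') ≤ 2 * k - 1 + r := by
  rcases Nat.eq_zero_or_pos k with hk0 | hkpos
  · subst hk0
    have hbot : C' = ⊥ := by
      rw [hC']
      have : (Set.range fun i : Fin 0 => G' i) = ∅ := Set.range_eq_empty _
      simp [this]
    have : starProd C' C' = ⊥ := by
      rw [hbot, starProd]
      have : {w : Fin (n + r) → F | ∃ a ∈ (⊥ : Submodule F (Fin (n + r) → F)),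
          ∃ b ∈ (⊥ : Submodule F (Fin (n + r) → F)), w = a * b} ⊆ {0} := by
        rintro w ⟨a, ha, b, hb, rfl⟩
        simp only [Submodule.mem_bot] at ha hb
        simp [ha, hb]
      refine le_antisymm ?_ bot_le
      refine (Submodule.span_le.2 (this.trans ?_))
      intro z hz; simp_all
    rw [this]
    simp
  · -- the restriction map
    set π : (Fin (n + r) → F) →ₗ[F] (Fin n → F) := (restrAlg (F := F) ⇑ι).toLinearMap with hπ
    have hπapp : ∀ v : Fin (n + r) → F, π v = v ∘ ι := fun _ => rfl
    -- image of C' under π is the GRS code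
    have hmapC' : C'.map π = GRS k x y := by
      rw [hC', Submodule.map_span, ← hG]
      congr 1
      ext w
      simp only [Set.mem_image, Set.mem_range]
      constructor
      · rintro ⟨v, ⟨i, rfl⟩, rfl⟩
        exact ⟨i, by funext j; exact (hG' i j).symm⟩
      · rintro ⟨i, rfl⟩
        exact ⟨G' i, ⟨i, rfl⟩, by funext j; exact (hG' i j)⟩
    -- image of the square under π is the square GRS code
    have hmapSq : (starProd C' C').map π = GRS (2 * k - 1) x (y * y) := by
      rw [starProd_eq_mul, show π = (restrAlg (F := F) ⇑ι).toLinearMap from rfl,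
        Submodule.map_mul, ← starProd_eq_mul, hmapC', starProd_GRS hkpos]
    have hcard : Fintype.card (Fin n) = n := Fintype.card_fin n
    have h2k1 : 2 * k - 1 ≤ Fintype.card (Fin n) := by rw [hcard]; omega
    have hyy : ∀ i, (y * y) i ≠ 0 := fun i => mul_ne_zero (hy i) (hy i)
    have hfr : Module.finrank F ↥((starProd C' C').map π) = 2 * k - 1 := by
      rw [hmapSq]; exact finrank_GRS h2k1 hx hyy
    constructor
    · calc 2 * k - 1 = Module.finrank F ↥((starProd C' C').map π) := hfr.symm
        _ ≤ Module.finrank F ↥(starProd C' C') := Submodule.finrank_map_le π _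
    · have hkerπ : Module.finrank F (LinearMap.ker π) = r := by
        have hsurj : Function.Surjective π :=
          LinearMap.funLeft_surjective_of_injective F F ι ι.injective
        have h1 := LinearMap.finrank_range_add_finrank_ker π
        rw [LinearMap.range_eq_top.2 hsurj, finrank_top] at h1
        simp only [Module.finrank_fin_fun] at h1
        omega
      have := finrank_le_finrank_map_add_finrank_ker π (starProd C' C')
      rw [hfr, hkerπ] at this
      exact this
end

section
/- With the notation of the previous setting (C = D ⊕ ⟨u⟩, C_pub = D ⊕ ⟨v⟩, λ₀ ∈ D^⊥ \ (C^⊥ ∪ C_pub^⊥)), define a₀ := (1/⟨λ₀,u⟩)(v − u). Then ⟨a₀,λ₀⟩ ≠ −1 and the map ψ(p) = p + ⟨λ₀,p⟩ a₀ is a linear isomorphism from C onto C_pub. -/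
open Submodule Matrix

/-- Dot product with a fixed vector, as a linear map. -/
noncomputable def dotL {F : Type*} [Field F] {n : ℕ} (l : Fin n → F) :
    (Fin n → F) →ₗ[F] F where
  toFun p := l ⬝ᵥ p
  map_add' p q := by simp [dotProduct, mul_add, Finset.sum_add_distrib]
  map_smul' c p := by
    simp [dotProduct, Finset.mul_sum, smul_eq_mul, mul_comm, mul_left_comm]

/-- The map `p ↦ p + ⟨l,p⟩ • a` as a linear map. -/
noncomputable def psi {F : Type*} [Field F] {n : ℕ} (l a : Fin n → F) :
    (Fin n → F) →ₗ[F] (Fin n → F) :=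
  LinearMap.id + (dotL l).smulRight a

/- `ψ` is a rank-one perturbation of the identity, so it is injective as soon as
`1 + ⟨λ₀, a₀⟩ ≠ 0`, and `⟨λ₀, a₀⟩ = ⟨λ₀, v⟩ / ⟨λ₀, u⟩ - 1` with `⟨λ₀, v⟩ ≠ 0`. Since `λ₀ ⊥ D`,
`ψ` fixes `D` pointwise, and the choice of `a₀` makes `ψ u = v`; hence `ψ` maps `D ⊕ ⟨u⟩` onto
`D ⊕ ⟨v⟩`. -/

section Psi

variable {F : Type*} [Field F] {n : ℕ}

theorem psi_apply (l a p : Fin n → F) : psi l a p = p + (l ⬝ᵥ p) • a := rfl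

theorem psi_eq_self_of_dotProduct_eq_zero {l p : Fin n → F} (a : Fin n → F) (h : l ⬝ᵥ p = 0) :
    psi l a p = p := by
  rw [psi_apply, h, zero_smul, add_zero]

theorem dotProduct_psi (l a p : Fin n → F) :
    l ⬝ᵥ psi l a p = (l ⬝ᵥ p) * (1 + l ⬝ᵥ a) := by
  rw [psi_apply, dotProduct_add, dotProduct_smul, smul_eq_mul]
  ring

theorem psi_injective {l a : Fin n → F} (h : 1 + l ⬝ᵥ a ≠ 0) : Function.Injective (psi l a) := by
  rw [← LinearMap.ker_eq_bot, Submodule.eq_bot_iff]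
  intro p hp
  have hlp : l ⬝ᵥ p = 0 := by
    have := congrArg (l ⬝ᵥ ·) (LinearMap.mem_ker.mp hp)
    simp only [dotProduct_psi, dotProduct_zero, mul_eq_zero] at this
    exact this.resolve_right h
  rwa [← psi_eq_self_of_dotProduct_eq_zero a hlp]

theorem psi_bijective {l a : Fin n → F} (h : 1 + l ⬝ᵥ a ≠ 0) : Function.Bijective (psi l a) :=
  have hinj := psi_injective h
  ⟨hinj, LinearMap.injective_iff_surjective.mp hinj⟩

end Psi

theorem dotProduct_ne_zero_of_not_orthogonal_sup_span {F : Type*} [Field F] {n : ℕ}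
    {D : Submodule F (Fin n → F)} {l u : Fin n → F} (hD : ∀ d ∈ D, l ⬝ᵥ d = 0)
    (h : ¬ ∀ c ∈ D ⊔ span F {u}, l ⬝ᵥ c = 0) : l ⬝ᵥ u ≠ 0 := by
  intro hu
  refine h fun c hc => ?_
  have hle : D ⊔ span F {u} ≤ LinearMap.ker (dotL l) :=
    sup_le hD ((span_singleton_le_iff_mem _ _).mpr hu)
  exact hle hc

theorem Submodule.map_sup_span_singleton_of_eqOn {R M : Type*} [Semiring R] [AddCommMonoid M]
    [Module R M] (f : M →ₗ[R] M) {D : Submodule R M} (hf : ∀ d ∈ D, f d = d) (u : M) :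
    map f (D ⊔ span R {u}) = D ⊔ span R {f u} := by
  have hD : map f D = D := by
    ext x
    refine ⟨?_, fun hx => ⟨x, hx, hf x hx⟩⟩
    rintro ⟨d, hd, rfl⟩
    rwa [hf d hd]
  rw [map_sup, hD, map_span, Set.image_singleton]

theorem stmt17_general {F : Type*} [Field F] {n : ℕ}
    (C Cpub D : Submodule F (Fin n → F)) (u v : Fin n → F)
    (hC : C = D ⊔ Submodule.span F {u}) (hCpub : Cpub = D ⊔ Submodule.span F {v})
    (l₀ : Fin n → F) (hl₀D : ∀ d ∈ D, l₀ ⬝ᵥ d = 0)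
    (hl₀C : ¬ ∀ c ∈ C, l₀ ⬝ᵥ c = 0) (hl₀Cp : ¬ ∀ c ∈ Cpub, l₀ ⬝ᵥ c = 0)
    (a₀ : Fin n → F) (ha₀ : a₀ = (l₀ ⬝ᵥ u)⁻¹ • (v - u)) :
    a₀ ⬝ᵥ l₀ ≠ -1 ∧ Function.Bijective (psi l₀ a₀) ∧
    Submodule.map (psi l₀ a₀) C = Cpub := by
  subst hC hCpub
  have hu := dotProduct_ne_zero_of_not_orthogonal_sup_span hl₀D hl₀C
  have hv := dotProduct_ne_zero_of_not_orthogonal_sup_span hl₀D hl₀Cp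
  have hdot : 1 + l₀ ⬝ᵥ a₀ = l₀ ⬝ᵥ v / l₀ ⬝ᵥ u := by
    rw [ha₀, dotProduct_smul, dotProduct_sub, smul_eq_mul]
    field_simp
    ring
  have hγ : 1 + l₀ ⬝ᵥ a₀ ≠ 0 := hdot ▸ div_ne_zero hv hu
  have hψu : psi l₀ a₀ u = v := by
    rw [psi_apply, ha₀, smul_smul, mul_inv_cancel₀ hu, one_smul, add_sub_cancel]
  refine ⟨fun h => hγ ?_, psi_bijective hγ, ?_⟩
  · rw [dotProduct_comm, h, add_neg_cancel]
  · have hψD (d) (hd : d ∈ D) : psi l₀ a₀ d = d :=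
      psi_eq_self_of_dotProduct_eq_zero a₀ (hl₀D d hd)
    rw [map_sup_span_singleton_of_eqOn _ hψD, hψu]

theorem stmt17 {F : Type*} [Field F] [Fintype F] {n : ℕ}
    (C Cpub D : Submodule F (Fin n → F)) (u v : Fin n → F)
    (huC : u ∈ C) (huD : u ∉ D) (hvC : v ∈ Cpub) (hvD : v ∉ D)
    (hC : C = D ⊔ Submodule.span F {u}) (hCpub : Cpub = D ⊔ Submodule.span F {v})
    (l₀ : Fin n → F) (hl₀D : ∀ d ∈ D, l₀ ⬝ᵥ d = 0)
    (hl₀C : ¬ ∀ c ∈ C, l₀ ⬝ᵥ c = 0) (hl₀Cp : ¬ ∀ c ∈ Cpub, l₀ ⬝ᵥ c = 0)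
    (a₀ : Fin n → F) (ha₀ : a₀ = (l₀ ⬝ᵥ u)⁻¹ • (v - u)) :
    a₀ ⬝ᵥ l₀ ≠ -1 ∧ Function.Bijective (psi l₀ a₀) ∧
    Submodule.map (psi l₀ a₀) C = Cpub :=
  stmt17_general C Cpub D u v hC hCpub l₀ hl₀D hl₀C hl₀Cp a₀ ha₀
end

section
/- Let x ∈ F_q^n have distinct entries with x_1 = 0 and x_2 = 1, y ∈ F_q^n have nonzero entries, and let C = GRS_k(x,y) with k ≤ n/2. For integers i ≥ 1, j ≥ 0 with i+j ≤ k−2, let C(i,j) denote the subcode of C given by evaluations of polynomials divisible by Xⁱ(X−1)ʲ of degree < k. Then C(i+1,j) ∗ C(i−1,j) = C(i,j)², and symmetrically C(i,j+1) ∗ C(i,j−1) = C(i,j)² for j ≥ 1. -/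
open Submodule Polynomial Matrix Pointwise
open Submodule Polynomial Matrix Pointwise

noncomputable def evalMap {F : Type*} [Field F] {n : ℕ} (x y : Fin n → F) (w : Polynomial F) :
    Polynomial F →ₗ[F] (Fin n → F) where
  toFun p := fun t => y t * y t * ((w * p).eval (x t))
  map_add' p q := by funext t; simp [mul_add]
  map_smul' c p := by funext t; simp [mul_smul_comm, smul_eq_mul]; ring

lemma degLT_mul_span {F : Type*} [Field F] {a b : ℕ} (ha : 1 ≤ a) (hb : 1 ≤ b) :
    Submodule.span F {r : Polynomial F | ∃ p ∈ degreeLT F a, ∃ q ∈ degreeLT F b, r = p * q}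
      = degreeLT F (a + b - 1) := by
  classical
  apply le_antisymm
  · rw [span_le]
    rintro r ⟨p, hp, q, hq, rfl⟩
    rw [SetLike.mem_coe, mem_degreeLT]
    rcases eq_or_ne p 0 with rfl | hp0
    · simp only [zero_mul, degree_zero, Nat.cast_withBot]
      exact WithBot.bot_lt_coe _
    rcases eq_or_ne q 0 with rfl | hq0
    · simp only [mul_zero, degree_zero, Nat.cast_withBot]
      exact WithBot.bot_lt_coe _
    rw [mem_degreeLT] at hp hq
    have hpa : p.natDegree < a := (natDegree_lt_iff_degree_lt hp0).2 hp
    have hqb : q.natDegree < b := (natDegree_lt_iff_degree_lt hq0).2 hq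
    have h1 : (p*q).natDegree < a + b - 1 := by
      have := natDegree_mul_le (p := p) (q := q)
      omega
    exact (natDegree_lt_iff_degree_lt (mul_ne_zero hp0 hq0)).1 h1
  · rw [degreeLT_eq_span_X_pow, span_le]
    intro r hr
    simp only [Finset.coe_image, Set.mem_image, Finset.mem_coe, Finset.mem_range] at hr
    obtain ⟨m, hm, rfl⟩ := hr
    apply subset_span
    refine ⟨X ^ min m (a-1), ?_, X ^ (m - min m (a-1)), ?_, ?_⟩
    · rw [mem_degreeLT, degree_X_pow]
      exact_mod_cast by omega
    · rw [mem_degreeLT, degree_X_pow]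
      exact_mod_cast by omega
    · rw [← pow_add]; congr 1; omega



lemma star_span {F : Type*} [Field F] {n : ℕ} (x y : Fin n → F) (u v : Polynomial F)
    (a b : ℕ) (ha : 1 ≤ a) (hb : 1 ≤ b) :
    starProd
      (Submodule.span F {c : Fin n → F | ∃ p : Polynomial F, p ∈ degreeLT F a ∧
        c = fun t => y t * ((u * p).eval (x t))})
      (Submodule.span F {c : Fin n → F | ∃ p : Polynomial F, p ∈ degreeLT F b ∧
        c = fun t => y t * ((v * p).eval (x t))})
    = Submodule.map (evalMap x y (u * v)) (degreeLT F (a + b - 1)) := by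
  set S₁ : Set (Fin n → F) := {c | ∃ p : Polynomial F, p ∈ degreeLT F a ∧
    c = fun t => y t * ((u * p).eval (x t))} with hS₁
  set S₂ : Set (Fin n → F) := {c | ∃ p : Polynomial F, p ∈ degreeLT F b ∧
    c = fun t => y t * ((v * p).eval (x t))} with hS₂
  have h1 : {w : Fin n → F | ∃ a' ∈ Submodule.span F S₁, ∃ b' ∈ Submodule.span F S₂, w = a' * b'}
      = ((Submodule.span F S₁ : Set (Fin n → F)) * (Submodule.span F S₂ : Set (Fin n → F))) := by
    ext w
    simp only [Set.mem_setOf_eq, Set.mem_mul, SetLike.mem_coe]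
    constructor
    · rintro ⟨a', ha', b', hb', rfl⟩; exact ⟨a', ha', b', hb', rfl⟩
    · rintro ⟨a', ha', b', hb', rfl⟩; exact ⟨a', ha', b', hb', rfl⟩
  have h2 : S₁ * S₂ = (evalMap x y (u * v)) ''
      {r : Polynomial F | ∃ p ∈ degreeLT F a, ∃ q ∈ degreeLT F b, r = p * q} := by
    ext w
    constructor
    · rintro ⟨c₁, hc₁, c₂, hc₂, rfl⟩
      obtain ⟨p, hp, rfl⟩ := hc₁
      obtain ⟨q, hq, rfl⟩ := hc₂
      refine ⟨p * q, ⟨p, hp, q, hq, rfl⟩, ?_⟩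
      funext t
      simp only [evalMap, LinearMap.coe_mk, AddHom.coe_mk, Pi.mul_apply, eval_mul]
      ring
    · rintro ⟨r, ⟨p, hp, q, hq, rfl⟩, rfl⟩
      refine ⟨fun t => y t * ((u * p).eval (x t)), ⟨p, hp, rfl⟩,
        fun t => y t * ((v * q).eval (x t)), ⟨q, hq, rfl⟩, ?_⟩
      funext t
      simp only [evalMap, LinearMap.coe_mk, AddHom.coe_mk, Pi.mul_apply, eval_mul]
      ring
  unfold starProd
  rw [h1, ← Submodule.mul_eq_span_mul_set, Submodule.span_mul_span, h2, Submodule.span_image, degLT_mul_span ha hb]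


lemma pow_mul_pow_comm {F : Type*} [Field F] (u v : Polynomial F) (a b c d : ℕ) :
    (u ^ a * v ^ b) * (u ^ c * v ^ d) = u ^ (a + c) * v ^ (b + d) := by
  rw [mul_mul_mul_comm, ← pow_add, ← pow_add]

/-- The subcode `C(i,j)` of the GRS code `GRS_k(x,y)`: evaluations (scaled by `y`) of the
polynomials of degree `< k` divisible by `X^i (X-1)^j`. -/
noncomputable def GRSsub {F : Type*} [Field F] {n : ℕ} (k : ℕ) (x y : Fin n → F) (i j : ℕ) :
    Submodule F (Fin n → F) :=
  Submodule.span F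
    {c | ∃ p : Polynomial F, p ∈ Polynomial.degreeLT F (k - i - j) ∧
      c = fun t => y t * ((Polynomial.X ^ i * (Polynomial.X - 1) ^ j * p).eval (x t))}

theorem stmt18 {F : Type*} [Field F] [Fintype F] {n k : ℕ}
    (hn : 2 ≤ n) (hkn : 2 * k ≤ n)
    (x y : Fin n → F) (hx : Function.Injective x) (hy : ∀ t, y t ≠ 0)
    (h0 : x ⟨0, by omega⟩ = 0) (h1 : x ⟨1, by omega⟩ = 1)
    (i j : ℕ) (hi : 1 ≤ i) (hij : i + j ≤ k - 2) :
    starProd (GRSsub k x y (i + 1) j) (GRSsub k x y (i - 1) j)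
      = starProd (GRSsub k x y i j) (GRSsub k x y i j) ∧
    (1 ≤ j →
      starProd (GRSsub k x y i (j + 1)) (GRSsub k x y i (j - 1))
        = starProd (GRSsub k x y i j) (GRSsub k x y i j)) := by
  
  have hk : i + j + 2 ≤ k := by omega
  have key : ∀ i₁ j₁ i₂ j₂ : ℕ, 1 ≤ k - i₁ - j₁ → 1 ≤ k - i₂ - j₂ →
      starProd (GRSsub k x y i₁ j₁) (GRSsub k x y i₂ j₂) =
        Submodule.map (evalMap x y ((X ^ i₁ * (X - 1) ^ j₁) * (X ^ i₂ * (X - 1) ^ j₂)))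
          (degreeLT F ((k - i₁ - j₁) + (k - i₂ - j₂) - 1)) := by
    intro i₁ j₁ i₂ j₂ h1 h2
    unfold GRSsub
    exact star_span x y _ _ _ _ h1 h2
  constructor
  · rw [key (i+1) j (i-1) j (by omega) (by omega), key i j i j (by omega) (by omega)]
    have hP : (X ^ (i+1) * (X - 1) ^ j) * (X ^ (i-1) * (X - 1) ^ j)
        = ((X : Polynomial F) ^ i * (X - 1) ^ j) * (X ^ i * (X - 1) ^ j) := by
      rw [pow_mul_pow_comm, pow_mul_pow_comm, show i + 1 + (i - 1) = i + i from by omega]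
    have hN : (k - (i+1) - j) + (k - (i-1) - j) - 1 = (k - i - j) + (k - i - j) - 1 := by omega
    rw [hP, hN]
  · intro hj
    rw [key i (j+1) i (j-1) (by omega) (by omega), key i j i j (by omega) (by omega)]
    have hP : (X ^ i * (X - 1) ^ (j+1)) * (X ^ i * (X - 1) ^ (j-1))
        = ((X : Polynomial F) ^ i * (X - 1) ^ j) * (X ^ i * (X - 1) ^ j) := by
      rw [pow_mul_pow_comm, pow_mul_pow_comm, show j + 1 + (j - 1) = j + j from by omega]
    have hN : (k - i - (j+1)) + (k - i - (j-1)) - 1 = (k - i - j) + (k - i - j) - 1 := by omega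
    rw [hP, hN]
end
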